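/- arXiv:math/0302158 — 6 statements merged into one kernel-verified Lean document; each statement's English description precedes it below -/
import Mathlib

section
/- The projective curve 3X³ + 4Y³ + 5Z³ = 0 has a nontrivial point over ℝ and over ℚ_p for every prime p. -/
/-!
If one of `2, 3, 5, 6, 10, 45` has a cube root `r` in a field of characteristic zero, the cubic
has an evident point there, e.g. `(-r, 1, 1)` when `r ^ 3 = 3`. Over `ℝ` the cube root of `3`
exists. Modulo a prime `p ∤ 30` the cubes have index at most `3` in the cyclic group `𝔽ₚˣ`, so of
two non-cubes either the product or the quotient is a cube; applied to the pairs `2, 3` and `2, 5`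
this makes one of the six numbers a cube mod `p` (`45 = 27 · (2/3) / (2/5)`), and as `p ≠ 3`
Hensel's lemma lifts its cube root to `ℤ_[p]`. For `p = 2, 5` already `3` is a cube mod `p`, and
for `p = 3` the congruence `4 ^ 3 ≡ 10 mod 27` is precise enough for the strong form of Hensel's
lemma.
-/

def IsCube {M : Type*} [Monoid M] (a : M) : Prop := ∃ r, r ^ 3 = a

theorem IsCyclic.eq_or_eq_inv_of_pow_three_eq_one {G : Type*} [Group G] [Finite G] [IsCyclic G]
    {a b : G} (ha : a ^ 3 = 1) (hb : b ^ 3 = 1) (ha₁ : a ≠ 1) :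
    b = 1 ∨ b = a ∨ b = a⁻¹ := by
  classical
  have := Fintype.ofFinite G
  by_contra! h
  have ha_inv : a ≠ a⁻¹ := by
    intro h'
    have ha₂ : a ^ 2 = 1 := by rw [sq, ← mul_eq_one_iff_eq_inv.mpr h']
    exact ha₁ (by simpa [pow_succ, ha₂] using ha)
  have hsub : ({1, a, a⁻¹, b} : Finset G) ⊆ ({g | g ^ 3 = 1} : Finset G) := by
    intro g hg
    simp only [Finset.mem_insert, Finset.mem_singleton] at hg
    rcases hg with rfl | rfl | rfl | rfl <;> simp [ha, hb, inv_pow]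
  have := (Finset.card_le_card hsub).trans (IsCyclic.card_pow_eq_one_le (α := G) three_pos)
  rw [Finset.card_insert_of_notMem, Finset.card_insert_of_notMem,
    Finset.card_pair (Ne.symm h.2.2)] at this
  · omega
  · simp [ha_inv, Ne.symm h.2.1]
  · simp [ha₁, ha₁.symm, Ne.symm h.1]

theorem FiniteField.isCube_or_isCube_or_isCube_mul_or_isCube_div {K : Type*} [Field K] [Finite K]
    {a b : K} (ha : a ≠ 0) (hb : b ≠ 0) :
    IsCube a ∨ IsCube b ∨ IsCube (a * b) ∨ IsCube (a / b) := by
  let H : Subgroup Kˣ := (powMonoidHom 3 : Kˣ →* Kˣ).range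
  let χ : Kˣ →* Kˣ ⧸ H := QuotientGroup.mk' H
  have : IsCyclic (Kˣ ⧸ H) := isCyclic_of_surjective χ (QuotientGroup.mk'_surjective H)
  have hχ_cube (u : Kˣ) : χ u ^ 3 = 1 := by
    rw [← map_pow, QuotientGroup.mk'_apply, QuotientGroup.eq_one_iff]
    exact ⟨u, rfl⟩
  have hχ_eq_one (u : Kˣ) (h : χ u = 1) : IsCube (u : K) := by
    obtain ⟨r, hr⟩ := (QuotientGroup.eq_one_iff u).mp h
    exact ⟨r, by rw [← hr]; rfl⟩
  set u := Units.mk0 a ha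
  set v := Units.mk0 b hb
  by_cases hu : χ u = 1
  · exact .inl (hχ_eq_one u hu)
  rcases IsCyclic.eq_or_eq_inv_of_pow_three_eq_one (hχ_cube u) (hχ_cube v) hu with hv | hv | hv
  · exact .inr <| .inl <| hχ_eq_one v hv
  · have := hχ_eq_one (u / v) (by rw [map_div, hv, div_self'])
    exact .inr <| .inr <| .inr <| by simpa [u, v] using this
  · have := hχ_eq_one (u * v) (by rw [map_mul, hv, mul_inv_cancel])
    exact .inr <| .inr <| .inl <| by simpa [u, v] using this

namespace PadicInt

variable {p : ℕ} [Fact p.Prime]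

theorem toZMod_eq_zero_iff (x : ℤ_[p]) : toZMod x = 0 ↔ ‖x‖ < 1 := by
  rw [← RingHom.mem_ker, ker_toZMod, IsLocalRing.mem_maximalIdeal, mem_nonunits]

open Polynomial in
theorem exists_pow_eq_of_norm_sub_lt {n : ℕ} {u r : ℤ_[p]}
    (h : ‖r ^ n - u‖ < ‖(n : ℤ_[p]) * r ^ (n - 1)‖ ^ 2) : ∃ x : ℤ_[p], x ^ n = u := by
  obtain ⟨x, hx, -⟩ :=
    hensels_lemma (F := X ^ n - C u) (a := r) (by simpa [derivative_X_pow] using h)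
  exact ⟨x, sub_eq_zero.mp (by simpa using hx)⟩

theorem exists_pow_eq_of_toZMod {n : ℕ} {u : ℤ_[p]} (hn : (n : ZMod p) ≠ 0)
    (hu : toZMod u ≠ 0) (hroot : ∃ r, r ^ n = toZMod u) : ∃ x : ℤ_[p], x ^ n = u := by
  obtain ⟨r, hr⟩ := hroot
  obtain ⟨r, rfl⟩ := ZMod.ringHom_surjective toZMod r
  have hr₀ : toZMod r ≠ 0 := fun h => hu (by rw [← hr, h, zero_pow (by rintro rfl; simp at hn)])
  apply exists_pow_eq_of_norm_sub_lt (r := r)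
  have hdiff : ‖r ^ n - u‖ < 1 := by
    rw [← toZMod_eq_zero_iff, map_sub, map_pow, hr, sub_self]
  have hderiv : ‖(n : ℤ_[p]) * r ^ (n - 1)‖ = 1 := by
    refine le_antisymm (norm_le_one _) (not_lt.mp fun h => ?_)
    rw [← toZMod_eq_zero_iff, map_mul, map_pow, map_natCast] at h
    exact mul_ne_zero hn (pow_ne_zero _ hr₀) h
  rwa [hderiv, one_pow]

end PadicInt

def selmerCubeWitnesses : Finset ℤ := {2, 3, 5, 6, 10, 45}

def HasNontrivialSelmerPoint (K : Type*) [CommRing K] : Prop :=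
  ∃ x y z : K, ¬(x = 0 ∧ y = 0 ∧ z = 0) ∧ 3 * x ^ 3 + 4 * y ^ 3 + 5 * z ^ 3 = 0

theorem HasNontrivialSelmerPoint.of_isCube {K : Type*} [Field K] [CharZero K] {m : ℤ}
    (hm : m ∈ selmerCubeWitnesses) (hcube : IsCube (m : K)) : HasNontrivialSelmerPoint K := by
  obtain ⟨r, hr⟩ := hcube
  simp only [selmerCubeWitnesses, Finset.mem_insert, Finset.mem_singleton] at hm
  rcases hm with rfl | rfl | rfl | rfl | rfl | rfl <;> push_cast at hr
  · exact ⟨1, -r, 1, by simp, by linear_combination (-4) * hr⟩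
  · exact ⟨-r, 1, 1, by simp, by linear_combination (-3) * hr⟩
  · exact ⟨r, -r, 1, by simp, by linear_combination -hr⟩
  · exact ⟨-r ^ 2, 3, 0, by simp, by linear_combination (-3) * (r ^ 3 + 6) * hr⟩
  · exact ⟨0, -r, 2, by simp, by linear_combination (-4) * hr⟩
  · exact ⟨-r, 0, 3, by simp, by linear_combination (-3) * hr⟩

theorem ZMod.exists_isCube_selmerCubeWitness {p : ℕ} [Fact p.Prime] (hp3 : p ≠ 3) :
    ∃ m ∈ selmerCubeWitnesses, IsCube (m : ZMod p) ∧ (m : ZMod p) ≠ 0 := by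
  by_cases hp2 : p = 2
  · subst hp2
    exact ⟨3, by decide, ⟨1, by decide +revert⟩, by decide +revert⟩
  by_cases hp5 : p = 5
  · subst hp5
    exact ⟨3, by decide, ⟨2, by decide +revert⟩, by decide +revert⟩
  have : Fact (Nat.Prime 5) := ⟨by norm_num⟩
  have h2 : (2 : ZMod p) ≠ 0 := by exact_mod_cast ZMod.prime_ne_zero p 2 hp2
  have h3 : (3 : ZMod p) ≠ 0 := by exact_mod_cast ZMod.prime_ne_zero p 3 hp3
  have h5 : (5 : ZMod p) ≠ 0 := by exact_mod_cast ZMod.prime_ne_zero p 5 hp5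
  rcases FiniteField.isCube_or_isCube_or_isCube_mul_or_isCube_div h2 h3 with h | h | h | h23
  · exact ⟨2, by decide, by simpa using h, by simpa using h2⟩
  · exact ⟨3, by decide, by simpa using h, by simpa using h3⟩
  · exact ⟨6, by decide, by norm_num at h ⊢; exact h,
      by push_cast; rw [show (6 : ZMod p) = 2 * 3 by norm_num]; exact mul_ne_zero h2 h3⟩
  rcases FiniteField.isCube_or_isCube_or_isCube_mul_or_isCube_div h2 h5 with h | h | h | h25
  · exact ⟨2, by decide, by simpa using h, by simpa using h2⟩
  · exact ⟨5, by decide, by simpa using h, by simpa using h5⟩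
  · exact ⟨10, by decide, by norm_num at h ⊢; exact h,
      by push_cast; rw [show (10 : ZMod p) = 2 * 5 by norm_num]; exact mul_ne_zero h2 h5⟩
  obtain ⟨r, hr⟩ := h23
  obtain ⟨s, hs⟩ := h25
  have hs₀ : s ≠ 0 := fun h => div_ne_zero h2 h5 (by rw [← hs, h]; ring)
  have h45 : (45 : ZMod p) = 3 ^ 2 * 5 := by norm_num
  refine ⟨45, by decide, ⟨3 * r / s, ?_⟩,
    by push_cast; rw [h45]; exact mul_ne_zero (pow_ne_zero 2 h3) h5⟩
  rw [div_pow, mul_pow, hr, hs]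
  field_simp
  norm_num

theorem Real.hasNontrivialSelmerPoint : HasNontrivialSelmerPoint ℝ :=
  .of_isCube (m := 3) (by decide) ⟨3 ^ (3⁻¹ : ℝ), by
    simpa using Real.rpow_inv_natCast_pow (n := 3) (by norm_num : (0 : ℝ) ≤ 3) three_ne_zero⟩

theorem PadicInt.exists_pow_three_eq_ten : ∃ x : ℤ_[3], x ^ 3 = 10 := by
  apply exists_pow_eq_of_norm_sub_lt (r := 4)
  have h3 : ‖(3 : ℤ_[3])‖ = 3⁻¹ := by exact_mod_cast norm_p (p := 3)
  have h2 : ‖(2 : ℤ_[3])‖ = 1 := by exact_mod_cast norm_natCast_eq_one_iff.mpr (by norm_num)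
  have h16 : ‖(16 : ℤ_[3])‖ = 1 := by exact_mod_cast norm_natCast_eq_one_iff.mpr (by norm_num)
  rw [show (4 : ℤ_[3]) ^ 3 - 10 = 3 ^ 3 * 2 by norm_num,
    show ((3 : ℕ) : ℤ_[3]) * 4 ^ (3 - 1) = 3 * 16 by norm_num,
    norm_mul, norm_mul, norm_pow, h3, h2, h16]
  norm_num

theorem Padic.hasNontrivialSelmerPoint (p : ℕ) [Fact p.Prime] :
    HasNontrivialSelmerPoint ℚ_[p] := by
  suffices ∃ m ∈ selmerCubeWitnesses, ∃ x : ℤ_[p], x ^ 3 = m by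
    obtain ⟨m, hm, x, hx⟩ := this
    exact .of_isCube hm ⟨x, by exact_mod_cast congrArg ((↑) : ℤ_[p] → ℚ_[p]) hx⟩
  by_cases hp3 : p = 3
  · subst hp3
    exact ⟨10, by decide, PadicInt.exists_pow_three_eq_ten⟩
  obtain ⟨m, hm, hcube, hm₀⟩ := ZMod.exists_isCube_selmerCubeWitness hp3
  refine ⟨m, hm, PadicInt.exists_pow_eq_of_toZMod ?_ (by rwa [map_intCast]) (by rwa [map_intCast])⟩
  exact_mod_cast ZMod.prime_ne_zero p 3 hp3

/-- Selmer's cubic `3*X^3 + 4*Y^3 + 5*Z^3 = 0` has a nontrivial point over `ℝ` and over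
`ℚ_[p]` for every prime `p`. -/
theorem selmer_cubic_everywhere_locally_solvable :
    (∃ x y z : ℝ, ¬(x = 0 ∧ y = 0 ∧ z = 0) ∧ 3 * x ^ 3 + 4 * y ^ 3 + 5 * z ^ 3 = 0) ∧
      ∀ (p : ℕ) [Fact p.Prime], ∃ x y z : ℚ_[p], ¬(x = 0 ∧ y = 0 ∧ z = 0) ∧
        3 * x ^ 3 + 4 * y ^ 3 + 5 * z ^ 3 = 0 :=
  ⟨Real.hasNontrivialSelmerPoint, Padic.hasNontrivialSelmerPoint⟩
end

section
/- An integer d ≥ 1 is the area of a right triangle with rational side lengths if and only if the elliptic curve E_d : d·y² = x³ − x has a rational point with y ≠ 0. -/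
/-!
A rational right triangle `(a, b, c)` of area `d` gives the point
`x = (a + c) / b`, `y = 2 (a + c) / b ^ 2` on `d y ^ 2 = x ^ 3 - x`. Conversely, a point with
`y ≠ 0` has `x ^ 3 - x = d y ^ 2 > 0`, and the Pythagorean parametrisation
`(x ^ 2 - 1) ^ 2 + (2 x) ^ 2 = (x ^ 2 + 1) ^ 2`, scaled by `1 / |y|` and with absolute values
taken, is a right triangle of area `|x ^ 3 - x| / y ^ 2 = d`.
-/

section Field

variable {K : Type*} [Field K]

theorem area_mul_sq_eq_cube_sub_self_of_sq_add_sq {a b c : K} (hb : b ≠ 0)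
    (h : a ^ 2 + b ^ 2 = c ^ 2) :
    a * b / 2 * (2 * (a + c) / b ^ 2) ^ 2 = ((a + c) / b) ^ 3 - (a + c) / b := by
  field_simp
  linear_combination (a + c) * h

theorem exists_point_of_sq_add_sq [NeZero (2 : K)] {a b c : K} (hb : b ≠ 0)
    (h : a ^ 2 + b ^ 2 = c ^ 2) :
    ∃ x y : K, y ≠ 0 ∧ a * b / 2 * y ^ 2 = x ^ 3 - x := by
  have hac : a + c ≠ 0 := by
    intro hsum
    apply hb
    rw [eq_neg_of_add_eq_zero_right hsum] at h
    simpa using h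
  exact ⟨(a + c) / b, 2 * (a + c) / b ^ 2, by simp [hac, hb, two_ne_zero],
    area_mul_sq_eq_cube_sub_self_of_sq_add_sq hb h⟩

end Field

theorem exists_right_triangle_of_point {K : Type*} [Field K] [LinearOrder K]
    [IsStrictOrderedRing K] {d x y : K} (hd : 0 < d) (hy : y ≠ 0) (h : d * y ^ 2 = x ^ 3 - x) :
    ∃ a b c : K, 0 < a ∧ 0 < b ∧ 0 < c ∧ a ^ 2 + b ^ 2 = c ^ 2 ∧ a * b / 2 = d := by
  have hpos : 0 < x * (x ^ 2 - 1) := by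
    have : 0 < d * y ^ 2 := by positivity
    linear_combination this + h
  have hx : x ≠ 0 := left_ne_zero_of_mul hpos.ne'
  have hx1 : x ^ 2 - 1 ≠ 0 := right_ne_zero_of_mul hpos.ne'
  have hy' : 0 < |y| := abs_pos.mpr hy
  refine ⟨|x ^ 2 - 1| / |y|, 2 * |x| / |y|, (x ^ 2 + 1) / |y|, by positivity,
    by positivity, by positivity, ?_, ?_⟩
  · field_simp
    rw [sq_abs, sq_abs]
    ring
  · have harea : |x ^ 2 - 1| * |x| = d * y ^ 2 := by
      rw [← abs_mul, mul_comm, abs_of_pos hpos, h]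
      ring
    field_simp
    rw [sq_abs]
    linear_combination harea

/-- The congruent number problem: an integer `d ≥ 1` is the area of a right triangle with
rational side lengths iff the curve `E_d : d * y ^ 2 = x ^ 3 - x` has a rational point
with `y ≠ 0`. -/
theorem congruent_iff_point_on_Ed (d : ℤ) (hd : 1 ≤ d) :
    (∃ a b c : ℚ, 0 < a ∧ 0 < b ∧ 0 < c ∧ a ^ 2 + b ^ 2 = c ^ 2 ∧ a * b / 2 = d) ↔
      ∃ x y : ℚ, y ≠ 0 ∧ (d : ℚ) * y ^ 2 = x ^ 3 - x := by
  constructor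
  · rintro ⟨a, b, c, -, hb, -, hpyth, harea⟩
    rw [← harea]
    exact exists_point_of_sq_add_sq hb.ne' hpyth
  · rintro ⟨x, y, hy, h⟩
    exact exists_right_triangle_of_point (by exact_mod_cast hd) hy h
end

section
/- The integer 1 is not a congruent number: there is no right triangle with rational side lengths and area 1. -/
/-!
With `U = (a + b) / 2` and `V = (a - b) / 2`, the relations `a ^ 2 + b ^ 2 = c ^ 2` and `a * b = 2`
give `U ^ 4 - V ^ 4 = a * b * (a ^ 2 + b ^ 2) / 2 = c ^ 2`, and `V ≠ 0` because `2` is not a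
rational square. Clearing denominators contradicts Fermat's theorem that `x ^ 4 + y ^ 2 = z ^ 4`
has no integer solutions with `x y ≠ 0`, proved by descent on `|z|`. A solution with `x, y`
coprime gives the primitive Pythagorean triple `(x ^ 2, y, z ^ 2)`. If `x` is odd, its
parametrisation `x ^ 2 = m ^ 2 - n ^ 2`, `z ^ 2 = m ^ 2 + n ^ 2` gives the smaller solution
`n ^ 4 + (x z) ^ 2 = m ^ 4`. If `x` is even, the parametrisation has `x ^ 2 = 2 m n`, so `m`
and `n` are a square and twice a square, `z ^ 2 = t ^ 4 + 4 s ^ 4`, and parametrising this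
second triple gives a smaller solution.
-/

theorem Int.eq_sq_of_isCoprime_of_mul_eq_sq {a b c : ℤ} (hab : IsCoprime a b) (ha : 0 ≤ a)
    (h : a * b = c ^ 2) : ∃ a₀, a = a₀ ^ 2 := by
  obtain ⟨a₀, ha₀ | ha₀⟩ := Int.sq_of_isCoprime hab h
  · exact ⟨a₀, ha₀⟩
  · exact ⟨a₀, by nlinarith [sq_nonneg a₀]⟩

theorem Int.emod_two_eq_one_of_isCoprime_of_two_dvd {a b : ℤ} (hab : IsCoprime a b) (ha : 2 ∣ a) :
    b % 2 = 1 :=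
  Int.odd_iff.mp (Int.isCoprime_two_left.mp (hab.of_isCoprime_of_dvd_left ha))

theorem Rat.exists_mul_eq_intCast {q : ℚ} {k : ℕ} (hk : q.den ∣ k) : ∃ n : ℤ, q * k = n := by
  obtain ⟨m, rfl⟩ := hk
  exact ⟨q.num * m, by push_cast; rw [← mul_assoc, Rat.mul_den_eq_num]⟩

def QuarticDiffSq (a b c : ℤ) : Prop :=
  a ≠ 0 ∧ b ≠ 0 ∧ a ^ 4 + b ^ 2 = c ^ 4

namespace QuarticDiffSq

variable {a b c : ℤ}

theorem ne_zero (h : QuarticDiffSq a b c) : c ≠ 0 := by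
  rintro rfl
  obtain ⟨ha, -, h⟩ := h
  have : 0 < a ^ 4 := by positivity
  nlinarith [sq_nonneg b]

theorem exists_smaller_of_not_isCoprime (h : QuarticDiffSq a b c) (hab : ¬IsCoprime a b) :
    ∃ a' b' c', QuarticDiffSq a' b' c' ∧ c'.natAbs < c.natAbs := by
  have hc := h.ne_zero
  obtain ⟨ha, hb, heq⟩ := h
  rw [Int.isCoprime_iff_gcd_eq_one] at hab
  obtain ⟨p, hp, hpa, hpb⟩ := Nat.Prime.not_coprime_iff_dvd.mp hab
  have hpb : (p : ℤ) ∣ b := Int.natCast_dvd.mpr hpb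
  obtain ⟨a₁, rfl⟩ : (p : ℤ) ∣ a := Int.natCast_dvd.mpr hpa
  obtain ⟨c₁, rfl⟩ : (p : ℤ) ∣ c := (Nat.prime_iff_prime_int.mp hp).dvd_of_dvd_pow
    (heq ▸ dvd_add (dvd_pow (dvd_mul_right _ _) four_ne_zero) (dvd_pow hpb two_ne_zero))
  obtain ⟨b₁, rfl⟩ : (p : ℤ) ^ 2 ∣ b := by
    rw [← Int.pow_dvd_pow_iff two_ne_zero]
    exact ⟨c₁ ^ 4 - a₁ ^ 4, by linear_combination heq⟩
  have hp0 : (p : ℤ) ^ 4 ≠ 0 := pow_ne_zero 4 (by exact_mod_cast hp.ne_zero)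
  refine ⟨a₁, b₁, c₁, ⟨right_ne_zero_of_mul ha, right_ne_zero_of_mul hb, ?_⟩, ?_⟩
  · exact mul_left_cancel₀ hp0 (by linear_combination heq)
  · rw [Int.natAbs_mul, Int.natAbs_natCast]
    exact lt_mul_left (Int.natAbs_pos.mpr (right_ne_zero_of_mul hc)) hp.one_lt

theorem exists_smaller_of_odd (h : QuarticDiffSq a b c) (hab : IsCoprime a b) (ha : a % 2 = 1)
    (hc : 0 < c) : ∃ a' b' c', QuarticDiffSq a' b' c' ∧ c'.natAbs < c.natAbs := by
  obtain ⟨ha0, hb0, heq⟩ := h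
  have htriple : PythagoreanTriple (a ^ 2) b (c ^ 2) := by
    unfold PythagoreanTriple; linear_combination heq
  obtain ⟨m, n, h1, h2, h3, -, -, -⟩ := htriple.coprime_classification'
    (Int.isCoprime_iff_gcd_eq_one.mp hab.pow_left) (by rw [sq, Int.mul_emod, ha]; rfl)
    (by positivity)
  have hn : n ≠ 0 := by rintro rfl; simp [hb0] at h2
  refine ⟨n, a * c, m, ⟨hn, mul_ne_zero ha0 hc.ne', ?_⟩, ?_⟩
  · -- `m ^ 4 - n ^ 4 = (m ^ 2 - n ^ 2) * (m ^ 2 + n ^ 2) = a ^ 2 * c ^ 2`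
    linear_combination c ^ 2 * h1 + (m ^ 2 - n ^ 2) * h3
  · rw [Int.natAbs_lt_iff_sq_lt]
    nlinarith [sq_pos_of_ne_zero hn]

theorem exists_smaller_of_pythagoreanTriple_sq_two_mul_sq {t s c : ℤ}
    (h : PythagoreanTriple (t ^ 2) (2 * s ^ 2) c) (hts : Int.gcd (t ^ 2) (2 * s ^ 2) = 1)
    (ht : t ^ 2 % 2 = 1) (hs : s ≠ 0) (hc : 0 < c) :
    ∃ a b e, QuarticDiffSq a b e ∧ e.natAbs < c.natAbs := by
  obtain ⟨M, N, h1, h2, h3, hMN, -, hM⟩ := h.coprime_classification' hts ht hc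
  have hMN' : M * N = s ^ 2 := by linarith
  have hN : 0 < N := by
    by_contra! hN
    nlinarith [sq_pos_of_ne_zero hs, mul_nonpos_of_nonneg_of_nonpos hM hN]
  have hMN := Int.isCoprime_iff_gcd_eq_one.mpr hMN
  obtain ⟨e, rfl⟩ := Int.eq_sq_of_isCoprime_of_mul_eq_sq hMN hM hMN'
  obtain ⟨f, rfl⟩ := Int.eq_sq_of_isCoprime_of_mul_eq_sq hMN.symm hN.le (by linarith)
  refine ⟨f, t, e, ⟨?_, ?_, by linear_combination h1⟩, ?_⟩
  · rintro rfl; simp at hN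
  · rintro rfl; simp at ht
  · rw [Int.natAbs_lt_iff_sq_lt]
    nlinarith [sq_nonneg (e ^ 2 - 1), sq_pos_of_pos hN]

theorem exists_smaller_of_sq_add_sq_eq_sq {m n k c : ℤ} (hmn : IsCoprime m n) (hm : 0 < m)
    (hn : 0 < n) (hk : m * n = 2 * k ^ 2) (h : m ^ 2 + n ^ 2 = c ^ 2) (hc : 0 < c) :
    ∃ a b e, QuarticDiffSq a b e ∧ e.natAbs < c.natAbs := by
  wlog hm2 : 2 ∣ m generalizing m n
  · have hn2 : 2 ∣ n := (Int.prime_two.dvd_or_dvd ⟨k ^ 2, hk⟩).resolve_left hm2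
    exact this hmn.symm hn hm (by linarith) (by linarith) hn2
  have hn2 := Int.emod_two_eq_one_of_isCoprime_of_two_dvd hmn hm2
  obtain ⟨m₁, rfl⟩ := hm2
  obtain ⟨s, rfl⟩ := Int.eq_sq_of_isCoprime_of_mul_eq_sq hmn.of_mul_left_right (by linarith)
    (by linarith : m₁ * n = k ^ 2)
  obtain ⟨t, rfl⟩ := Int.eq_sq_of_isCoprime_of_mul_eq_sq hmn.symm.of_mul_right_right hn.le
    (by linarith : n * s ^ 2 = k ^ 2)
  have htriple : PythagoreanTriple (t ^ 2) (2 * s ^ 2) c := by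
    unfold PythagoreanTriple; linear_combination h
  exact exists_smaller_of_pythagoreanTriple_sq_two_mul_sq htriple
    (Int.isCoprime_iff_gcd_eq_one.mp hmn.symm) hn2 (by rintro rfl; simp at hm) hc

theorem exists_smaller_of_even (h : QuarticDiffSq a b c) (hab : IsCoprime a b) (ha : 2 ∣ a)
    (hc : 0 < c) : ∃ a' b' c', QuarticDiffSq a' b' c' ∧ c'.natAbs < c.natAbs := by
  obtain ⟨ha0, -, heq⟩ := h
  have htriple : PythagoreanTriple b (a ^ 2) (c ^ 2) := by
    unfold PythagoreanTriple; linear_combination heq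
  obtain ⟨m, n, -, h2, h3, hmn, -, hm⟩ := htriple.coprime_classification'
    (Int.isCoprime_iff_gcd_eq_one.mp hab.symm.pow_right)
    (Int.emod_two_eq_one_of_isCoprime_of_two_dvd hab ha) (by positivity)
  obtain ⟨k, rfl⟩ := ha
  have hk : m * n = 2 * k ^ 2 := by linarith
  have hk0 : k ≠ 0 := by rintro rfl; simp at ha0
  have hmn_pos : 0 < m * n := by rw [hk]; positivity
  have hm : 0 < m := lt_of_le_of_ne hm (by rintro rfl; simp at hmn_pos)
  exact exists_smaller_of_sq_add_sq_eq_sq (Int.isCoprime_iff_gcd_eq_one.mpr hmn) hm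
    (pos_of_mul_pos_right hmn_pos hm.le) hk h3.symm hc

theorem exists_smaller (h : QuarticDiffSq a b c) :
    ∃ a' b' c', QuarticDiffSq a' b' c' ∧ c'.natAbs < c.natAbs := by
  wlog hc : 0 < c generalizing c
  · rw [← Int.natAbs_abs]
    exact this ⟨h.1, h.2.1, by rw [Even.pow_abs (by decide), h.2.2]⟩ (abs_pos.mpr h.ne_zero)
  by_cases hab : IsCoprime a b
  · rcases Int.emod_two_eq_zero_or_one a with ha | ha
    · exact h.exists_smaller_of_even hab (Int.dvd_of_emod_eq_zero ha) hc
    · exact h.exists_smaller_of_odd hab ha hc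
  · exact h.exists_smaller_of_not_isCoprime hab

end QuarticDiffSq

theorem not_quarticDiffSq (a b c : ℤ) : ¬QuarticDiffSq a b c := by
  induction hn : c.natAbs using Nat.strong_induction_on generalizing a b c with
  | _ n ih =>
    intro h
    obtain ⟨a', b', c', h', hlt⟩ := h.exists_smaller
    exact ih _ (hn ▸ hlt) a' b' c' rfl h'

theorem not_quarticDiffSq_rat {a b c : ℚ} (ha : a ≠ 0) (hb : b ≠ 0) : a ^ 4 + b ^ 2 ≠ c ^ 4 := by
  intro h
  set d := a.den * b.den * c.den
  obtain ⟨A, hA⟩ := Rat.exists_mul_eq_intCast (q := a) (k := d) ((dvd_mul_right _ _).mul_right _)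
  obtain ⟨B, hB⟩ := Rat.exists_mul_eq_intCast (q := b) (k := d ^ 2)
    (((dvd_mul_left _ _).mul_right _).trans (dvd_pow_self _ two_ne_zero))
  obtain ⟨C, hC⟩ := Rat.exists_mul_eq_intCast (q := c) (k := d) (dvd_mul_left _ _)
  have hd : (d : ℚ) ≠ 0 := by positivity
  refine not_quarticDiffSq A B C ⟨?_, ?_, ?_⟩
  · exact_mod_cast hA ▸ mul_ne_zero ha hd
  · exact_mod_cast hB ▸ mul_ne_zero hb (by positivity)
  · have : (A : ℚ) ^ 4 + B ^ 2 = C ^ 4 := by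
      rw [← hA, ← hB, ← hC]; push_cast; linear_combination (d : ℚ) ^ 4 * h
    exact_mod_cast this

/-- Fermat: `1` is not a congruent number — there is no right triangle with rational side
lengths and area `1`. -/
theorem one_not_congruent :
    ¬∃ a b c : ℚ, 0 < a ∧ 0 < b ∧ 0 < c ∧ a ^ 2 + b ^ 2 = c ^ 2 ∧ a * b / 2 = 1 := by
  rintro ⟨a, b, c, -, -, hc, hpyth, harea⟩
  have hab : a * b = 2 := by linarith
  have hne : a - b ≠ 0 := by
    intro h
    have : IsSquare (2 : ℚ) := ⟨b, by rw [← hab, sub_eq_zero.mp h]⟩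
    norm_num at this
  apply not_quarticDiffSq_rat (div_ne_zero hne two_ne_zero) hc.ne' (c := (a + b) / 2)
  linear_combination -hpyth - (a ^ 2 + b ^ 2) / 2 * hab
end

section
/- The elliptic curve y² = x³ − x has exactly four rational points: the point at infinity, (0,0), (1,0), and (−1,0). -/
/-- The congruent number curve `y ^ 2 = x ^ 3 - x` over `ℚ`. -/
def congruentCurveOne : WeierstrassCurve ℚ := ⟨0, 0, 0, -1, 0⟩

/-!
If `(x, y)` is a rational point with `y ≠ 0`, the `x`-coordinate of its double is a square `r ^ 2`
with `r ^ 2 - 1` and `r ^ 2 + 1` squares too, so `r ^ 4 - 1` is a rational square, and clearing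
denominators gives integers with `a ^ 4 - b ^ 4 = c ^ 2`, `b c ≠ 0`. Fermat's descent excludes
these: the primitive Pythagorean triple `(b ^ 2, c, a ^ 2)` (followed, when `b` is even, by a
second Pythagorean triple) yields such a solution with smaller `|a|`. So `y = 0`, and the affine
points are the three points of order two.
-/

theorem Int.exists_sq_of_isCoprime_of_pos {a b c : ℤ} (h : IsCoprime a b) (ha : 0 < a)
    (heq : a * b = c ^ 2) : ∃ a₀ : ℤ, a = a₀ ^ 2 := by
  obtain ⟨a₀, rfl | rfl⟩ := Int.sq_of_isCoprime h heq
  · exact ⟨a₀, rfl⟩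
  · nlinarith [sq_nonneg a₀]

def Fermat42Sub (a b c : ℤ) : Prop := b ≠ 0 ∧ c ≠ 0 ∧ a ^ 4 = b ^ 4 + c ^ 2

namespace Fermat42Sub

variable {a b c : ℤ}

lemma ne_zero (h : Fermat42Sub a b c) : a ≠ 0 := by
  obtain ⟨hb, -, h⟩ := h
  rintro rfl
  have : 0 < b ^ 4 := by positivity
  nlinarith [sq_nonneg c]

lemma of_mul {k : ℤ} (hk : k ≠ 0) (h : Fermat42Sub (k * a) (k * b) (k ^ 2 * c)) :
    Fermat42Sub a b c := by
  obtain ⟨hb, hc, h⟩ := h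
  refine ⟨right_ne_zero_of_mul hb, right_ne_zero_of_mul hc, ?_⟩
  have : k ^ 4 * a ^ 4 = k ^ 4 * (b ^ 4 + c ^ 2) := by linear_combination h
  exact mul_left_cancel₀ (pow_ne_zero 4 hk) this

lemma exists_natAbs_lt_of_not_isCoprime (h : Fermat42Sub a b c) (hab : ¬IsCoprime a b) :
    ∃ a' b' c', Fermat42Sub a' b' c' ∧ a'.natAbs < a.natAbs := by
  have hg : (1 : ℤ) < Int.gcd a b := by
    have := Int.gcd_pos_of_ne_zero_left b h.ne_zero
    have : Int.gcd a b ≠ 1 := mt Int.isCoprime_iff_gcd_eq_one.mpr hab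
    omega
  obtain ⟨a', ha⟩ := Int.gcd_dvd_left a b
  obtain ⟨b', hb⟩ := Int.gcd_dvd_right a b
  generalize (Int.gcd a b : ℤ) = g at hg ha hb
  obtain ⟨c', hc⟩ : g ^ 2 ∣ c := by
    rw [← Int.pow_dvd_pow_iff two_ne_zero]
    refine ⟨a' ^ 4 - b' ^ 4, ?_⟩
    rw [← sub_eq_of_eq_add' h.2.2, ha, hb]
    ring
  rw [ha, hb, hc] at h
  refine ⟨a', b', c', h.of_mul (by positivity), ?_⟩
  have ha' : a' ≠ 0 := by rintro rfl; exact h.ne_zero (mul_zero g)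
  rw [ha, Int.natAbs_mul]
  exact lt_mul_left (Int.natAbs_pos.mpr ha') (by omega)

lemma isCoprime_right (h : Fermat42Sub a b c) (hab : IsCoprime a b) : IsCoprime b c := by
  have hb : IsCoprime b (c ^ 2 + b * b ^ 3) := by
    rw [← show a ^ 4 = c ^ 2 + b * b ^ 3 by linear_combination h.2.2]
    exact hab.symm.pow_right
  exact IsCoprime.pow_right_iff two_pos |>.mp hb.of_add_mul_left_right

lemma exists_natAbs_lt_of_odd (h : Fermat42Sub a b c) (hab : IsCoprime a b) (hb : Odd b) :
    ∃ a' b' c', Fermat42Sub a' b' c' ∧ a'.natAbs < a.natAbs := by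
  have htriple : PythagoreanTriple (b ^ 2) c (a ^ 2) := by
    unfold PythagoreanTriple; linear_combination -h.2.2
  obtain ⟨m, n, hb2, hc, ha2, -⟩ := htriple.coprime_classification'
    (Int.isCoprime_iff_gcd_eq_one.mp (h.isCoprime_right hab).pow_left)
    (Int.odd_iff.mp hb.pow) (by have := h.ne_zero; positivity)
  have hn : n ≠ 0 := by rintro rfl; exact h.2.1 (by simpa using hc)
  refine ⟨m, n, a * b, ⟨hn, mul_ne_zero h.ne_zero h.1, ?_⟩, ?_⟩
  · linear_combination (-a ^ 2) * hb2 - (m ^ 2 - n ^ 2) * ha2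
  · rw [Int.natAbs_lt_iff_sq_lt, ha2]
    exact lt_add_of_pos_right _ (by positivity)

/- With `m = s ^ 2 - t ^ 2` and `n = 2 * s * t`, the pairwise coprime factors of
`β ^ 2 = s * t * (s ^ 2 - t ^ 2)` are squares `u ^ 2`, `v ^ 2`, `w ^ 2`,
and `u ^ 4 - v ^ 4 = w ^ 2`. -/
lemma exists_natAbs_lt_of_pythagoreanTriple {m n k β : ℤ} (h : PythagoreanTriple m n k)
    (hmn : IsCoprime m n) (hm : Odd m) (hm0 : 0 < m) (hk : 0 < k) (hβ : β ≠ 0)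
    (hmnβ : m * n = 2 * β ^ 2) : ∃ a b c, Fermat42Sub a b c ∧ a.natAbs < k.natAbs := by
  obtain ⟨s, t, rfl, rfl, rfl, hst, -, hs⟩ :=
    h.coprime_classification' (Int.isCoprime_iff_gcd_eq_one.mp hmn) (Int.odd_iff.mp hm) hk
  replace hst : IsCoprime s t := Int.isCoprime_iff_gcd_eq_one.mpr hst
  have hprod : s * (t * (s ^ 2 - t ^ 2)) = β ^ 2 :=
    mul_left_cancel₀ two_ne_zero (by linear_combination hmnβ)
  have hs0 : 0 < s := by
    refine hs.lt_of_ne fun hs0 => hβ ?_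
    rw [← hs0, zero_mul] at hprod
    exact pow_eq_zero_iff two_ne_zero |>.mp hprod.symm
  have ht0 : 0 < t := by
    have : 0 < s * (t * (s ^ 2 - t ^ 2)) := hprod ▸ by positivity
    exact pos_of_mul_pos_left (pos_of_mul_pos_right this hs0.le) hm0.le
  have hsr : IsCoprime s (s ^ 2 - t ^ 2) := by
    simpa [sub_eq_neg_add, sq] using (hst.pow_right (n := 2)).neg_right.add_mul_left_right s
  have htr : IsCoprime t (s ^ 2 - t ^ 2) := by
    simpa [sub_eq_add_neg, sq] using (hst.symm.pow_right (n := 2)).add_mul_left_right (-t)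
  obtain ⟨u, hu⟩ := Int.exists_sq_of_isCoprime_of_pos (hst.mul_right hsr) hs0 hprod
  obtain ⟨v, hv⟩ := Int.exists_sq_of_isCoprime_of_pos (hst.symm.mul_right htr) ht0
    (show t * (s * (s ^ 2 - t ^ 2)) = β ^ 2 by linear_combination hprod)
  obtain ⟨w, hw⟩ := Int.exists_sq_of_isCoprime_of_pos (hsr.symm.mul_right htr.symm) hm0
    (show (s ^ 2 - t ^ 2) * (s * t) = β ^ 2 by linear_combination hprod)
  refine ⟨u, v, w, ⟨?_, ?_, ?_⟩, ?_⟩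
  · rintro rfl; exact ht0.ne' (by simpa using hv)
  · rintro rfl; exact hm0.ne' (by simpa using hw)
  · linear_combination hw - (s + u ^ 2) * hu + (t + v ^ 2) * hv
  · rw [Int.natAbs_lt_iff_sq_lt, ← hu]
    nlinarith

lemma exists_natAbs_lt_of_even (h : Fermat42Sub a b c) (hab : IsCoprime a b) (hb : Even b) :
    ∃ a' b' c', Fermat42Sub a' b' c' ∧ a'.natAbs < a.natAbs := by
  have ha : Odd a := Int.not_even_iff_odd.mp fun ha =>
    Int.prime_two.not_isUnit (hab.isUnit_of_dvd' ha.two_dvd hb.two_dvd)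
  have hc : Odd c := by
    have : Odd (c ^ 2) := by
      rw [show c ^ 2 = a ^ 4 - b ^ 4 by linear_combination -h.2.2]
      exact ha.pow.sub_even (hb.pow_of_ne_zero four_ne_zero)
    exact (Int.odd_pow.mp this).resolve_right two_ne_zero
  have htriple : PythagoreanTriple c (b ^ 2) (a ^ 2) := by
    unfold PythagoreanTriple; linear_combination -h.2.2
  obtain ⟨m, n, -, hb2, ha2, hmn, hpar, hm⟩ := htriple.coprime_classification'
    (Int.isCoprime_iff_gcd_eq_one.mp (h.isCoprime_right hab).symm.pow_right)
    (Int.odd_iff.mp hc) (by have := h.ne_zero; positivity)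
  replace hmn : IsCoprime m n := Int.isCoprime_iff_gcd_eq_one.mpr hmn
  obtain ⟨β, rfl⟩ := hb
  have hβ : β ≠ 0 := by rintro rfl; exact h.1 (add_zero 0)
  have hmnβ : m * n = 2 * β ^ 2 :=
    mul_left_cancel₀ two_ne_zero (by linear_combination -hb2)
  have hmn0 : 0 < m * n := hmnβ ▸ by positivity
  have hm0 : 0 < m := lt_of_le_of_ne hm (by rintro rfl; simp at hmn0)
  have hn0 : 0 < n := pos_of_mul_pos_right hmn0 hm
  have htriple' : PythagoreanTriple m n |a| := by
    unfold PythagoreanTriple; rw [abs_mul_abs_self]; linear_combination -ha2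
  rw [← Int.natAbs_abs a]
  rcases hpar with ⟨-, hnodd⟩ | ⟨hmodd, -⟩
  · exact exists_natAbs_lt_of_pythagoreanTriple htriple'.symm hmn.symm (Int.odd_iff.mpr hnodd)
      hn0 (abs_pos.mpr h.ne_zero) hβ (by linear_combination hmnβ)
  · exact exists_natAbs_lt_of_pythagoreanTriple htriple' hmn (Int.odd_iff.mpr hmodd) hm0
      (abs_pos.mpr h.ne_zero) hβ hmnβ

lemma exists_natAbs_lt (h : Fermat42Sub a b c) :
    ∃ a' b' c', Fermat42Sub a' b' c' ∧ a'.natAbs < a.natAbs := by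
  by_cases hab : IsCoprime a b
  · rcases Int.even_or_odd b with hb | hb
    exacts [h.exists_natAbs_lt_of_even hab hb, h.exists_natAbs_lt_of_odd hab hb]
  · exact h.exists_natAbs_lt_of_not_isCoprime hab

end Fermat42Sub

theorem not_fermat42Sub (a b c : ℤ) : ¬Fermat42Sub a b c := by
  induction h : a.natAbs using Nat.strong_induction_on generalizing a b c with
  | _ n ih =>
    intro hF
    obtain ⟨a', b', c', hF', hlt⟩ := hF.exists_natAbs_lt
    exact ih _ (h ▸ hlt) a' b' c' rfl hF'

theorem Rat.eq_zero_of_pow_four_sub_one_eq_sq {r w : ℚ} (h : r ^ 4 - 1 = w ^ 2) : w = 0 := by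
  have hden : (r.den : ℚ) ≠ 0 := by positivity
  have hw : ((r.num ^ 4 - (r.den : ℤ) ^ 4 : ℤ) : ℚ) = (w * r.den ^ 2) ^ 2 := by
    rw [← Rat.num_div_den r] at h
    field_simp at h
    push_cast
    linear_combination h
  obtain ⟨z, hz⟩ := Rat.isSquare_intCast_iff.mp ⟨_, hw.trans (sq _)⟩
  have hz0 : z = 0 := by
    by_contra hz0
    exact not_fermat42Sub r.num r.den z ⟨by positivity, hz0, by linear_combination hz⟩
  have : (w * r.den ^ 2) ^ 2 = 0 := by rw [← hw, hz, hz0]; simp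
  simpa [hden] using this

theorem Rat.eq_zero_of_sq_eq_cube_sub_self {x y : ℚ} (h : y ^ 2 = x ^ 3 - x) : y = 0 := by
  by_contra hy
  have h2y : 2 * y ≠ 0 := mul_ne_zero two_ne_zero hy
  -- `r ^ 2` is the `x`-coordinate of twice the point `(x, y)`.
  obtain ⟨r, hr⟩ : ∃ r, r = (x ^ 2 + 1) / (2 * y) := ⟨_, rfl⟩
  obtain ⟨s, hs⟩ : ∃ s, s = (x ^ 2 - 2 * x - 1) / (2 * y) := ⟨_, rfl⟩
  obtain ⟨t, ht⟩ : ∃ t, t = (x ^ 2 + 2 * x - 1) / (2 * y) := ⟨_, rfl⟩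
  have hrs : r ^ 2 - 1 = s ^ 2 := by rw [hr, hs]; field_simp; linear_combination (-4) * h
  have hrt : r ^ 2 + 1 = t ^ 2 := by rw [hr, ht]; field_simp; linear_combination 4 * h
  have hst : s * t = 0 := Rat.eq_zero_of_pow_four_sub_one_eq_sq <| by
    linear_combination (r ^ 2 + 1) * hrs + s ^ 2 * hrt
  have h2 : ¬IsSquare (2 : ℚ) := by norm_num
  rcases mul_eq_zero.mp hst with rfl | rfl
  · rw [eq_comm, div_eq_zero_iff, or_iff_left h2y] at hs
    exact h2 ⟨x - 1, by linear_combination -hs⟩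
  · rw [eq_comm, div_eq_zero_iff, or_iff_left h2y] at ht
    exact h2 ⟨x + 1, by linear_combination -ht⟩

instance : congruentCurveOne.IsElliptic :=
  ⟨isUnit_iff_ne_zero.mpr <| by
    norm_num [congruentCurveOne, WeierstrassCurve.Δ, WeierstrassCurve.b₂, WeierstrassCurve.b₄,
      WeierstrassCurve.b₆, WeierstrassCurve.b₈]⟩

lemma congruentCurveOne_equation_iff {x y : ℚ} :
    congruentCurveOne.toAffine.Equation x y ↔ y ^ 2 = x ^ 3 - x := by
  rw [WeierstrassCurve.Affine.equation_iff]
  simp [congruentCurveOne, sub_eq_add_neg]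

lemma congruentCurveOne_equation_iff_mem {p : ℚ × ℚ} :
    congruentCurveOne.toAffine.Equation p.1 p.2 ↔
      p ∈ ({(0, 0), (1, 0), (-1, 0)} : Finset (ℚ × ℚ)) := by
  obtain ⟨x, y⟩ := p
  simp only [congruentCurveOne_equation_iff, Finset.mem_insert, Finset.mem_singleton,
    Prod.mk.injEq]
  constructor
  · intro h
    obtain rfl := Rat.eq_zero_of_sq_eq_cube_sub_self h
    have : x * (x - 1) * (x + 1) = 0 := by linear_combination -h
    rcases mul_eq_zero.mp this with hx | hx
    · rcases mul_eq_zero.mp hx with hx | hx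
      · exact .inl ⟨hx, rfl⟩
      · exact .inr (.inl ⟨by linear_combination hx, rfl⟩)
    · exact .inr (.inr ⟨by linear_combination hx, rfl⟩)
  · rintro (⟨rfl, rfl⟩ | ⟨rfl, rfl⟩ | ⟨rfl, rfl⟩) <;> norm_num

/-- The elliptic curve `y ^ 2 = x ^ 3 - x` has exactly four rational points: the point at
infinity, `(0, 0)`, `(1, 0)` and `(-1, 0)`. -/
theorem congruent_curve_one_points :
    (∀ x y : ℚ, congruentCurveOne.toAffine.Equation x y →
        (x = 0 ∧ y = 0) ∨ (x = 1 ∧ y = 0) ∨ (x = -1 ∧ y = 0)) ∧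
      Nat.card congruentCurveOne.toAffine.Point = 4 := by
  refine ⟨fun x y h => ?_, ?_⟩
  · simpa using congruentCurveOne_equation_iff_mem (p := (x, y)) |>.mp h
  · rw [Nat.card_congr <| (WeierstrassCurve.Affine.pointEquiv _).trans
        (Equiv.subtypeEquivRight fun _ => congruentCurveOne_equation_iff_mem).optionCongr,
      Finite.card_option, Nat.card_eq_finsetCard]
    decide
end

section
/- If p ≡ 3 (mod 4) is prime, then the number of points on the curve y² = x³ − x over the finite field 𝔽_p (including the point at infinity) is exactly p + 1. -/
open Finset

/-- For a prime `p ≡ 3 (mod 4)`, the curve `y ^ 2 = x ^ 3 - x` over `𝔽_p` has exactly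
`p + 1` points, including the point at infinity. -/
theorem congruent_curve_point_count_mod_four (p : ℕ) (hp : p.Prime) (h3 : p % 4 = 3) :
    Nat.card {q : ZMod p × ZMod p // q.2 ^ 2 = q.1 ^ 3 - q.1} + 1 = p + 1 := by
  haveI : Fact p.Prime := ⟨hp⟩
  have hp2 : p ≠ 2 := by omega
  have hchar : ringChar (ZMod p) ≠ 2 := (ZMod.ringChar_zmod_n p).symm ▸ hp2
  set χ := quadraticChar (ZMod p)
  -- fiberwise count
  have hcard : (Nat.card {q : ZMod p × ZMod p // q.2 ^ 2 = q.1 ^ 3 - q.1} : ℤ)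
      = ∑ x : ZMod p, ((Set.toFinset {y : ZMod p | y ^ 2 = x ^ 3 - x}).card : ℤ) := by
    rw [Nat.card_eq_fintype_card]
    rw [Fintype.card_congr (Equiv.subtypeProdEquivSigmaSubtype
      (fun x y : ZMod p => y ^ 2 = x ^ 3 - x))]
    rw [Fintype.card_sigma]
    push_cast
    congr 1
    ext x
    rw [Set.toFinset_card]
    rfl
  have hsq : ∀ x : ZMod p, ((Set.toFinset {y : ZMod p | y ^ 2 = x ^ 3 - x}).card : ℤ)
      = χ (x ^ 3 - x) + 1 := fun x => quadraticChar_card_sqrts hchar _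
  have hS : ∑ x : ZMod p, (χ (x ^ 3 - x) : ℤ) = 0 := by
    have hneg : (χ (-1) : ℤ) = -1 := by
      rw [quadraticChar_neg_one hchar, ZMod.card]
      exact ZMod.χ₄_nat_three_mod_four h3
    have h1 : ∑ x : ZMod p, (χ (x ^ 3 - x) : ℤ)
        = ∑ x : ZMod p, (χ ((-x) ^ 3 - (-x)) : ℤ) :=
      (Fintype.sum_equiv (Equiv.neg (ZMod p)) _ _ (fun x => rfl)).symm
    have h2 : ∀ x : ZMod p, (χ ((-x) ^ 3 - (-x)) : ℤ) = - χ (x ^ 3 - x) := by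
      intro x
      have : (-x) ^ 3 - (-x) = (-1) * (x ^ 3 - x) := by ring
      rw [this, map_mul, hneg]
      push_cast
      ring
    rw [h1]
    simp only [h2, Finset.sum_neg_distrib] at h1 ⊢
    linarith [h1]
  have : (Nat.card {q : ZMod p × ZMod p // q.2 ^ 2 = q.1 ^ 3 - q.1} : ℤ) = p := by
    rw [hcard]
    simp only [hsq]
    rw [Finset.sum_add_distrib, hS, Finset.sum_const, Finset.card_univ, ZMod.card]
    simp
  omega
end

section
/- The group of rational points of the elliptic curve y² = x³ − 25x is infinite; in particular (−4, 6) is a point of infinite order. -/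
/-!
On a curve `y² = x³ + a x + b` whose coefficients are integral for a nonarchimedean absolute value
`v` with `v 2 < 1`, a point `Q` with `1 < v (x Q)` satisfies `v (x (2Q)) = v (x Q) / v 2 ²`: the
tangent slope `(3x² + a) / (2y)` has `v (slope)² = v x / v 2 ²`, since `v y² = v x³`, and this
dominates `v (2x)`. Hence the multiples `2 ^ m • Q` are pairwise distinct and `Q` has infinite
order. For `P = (-4, 6)` on `E₅` one finds `x (2P) = 1681 / 144`, of `2`-adic absolute value `16`.
-/

/-- The congruent number curve `E₅ : y ^ 2 = x ^ 3 - 25 * x` over `ℚ`. -/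
def congruentCurveFive : WeierstrassCurve ℚ := ⟨0, 0, 0, -25, 0⟩

open WeierstrassCurve WeierstrassCurve.Affine

section Doubling

variable {K : Type*} [Field K] {v : AbsoluteValue K ℝ}

lemma AbsoluteValue.apply_three_eq_one (hv : IsNonarchimedean v) (h₂ : v 2 < 1) : v 3 = 1 := by
  have h : v 2 < v 1 := by rwa [map_one]
  rw [show (3 : K) = 1 + 2 by norm_num, hv.add_eq_left_of_lt h, map_one]

variable {W : WeierstrassCurve K} [W.IsShortNF]

lemma WeierstrassCurve.Affine.Equation.abv_sq_eq (hv : IsNonarchimedean v)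
    (ha₄ : v W.a₄ ≤ 1) (ha₆ : v W.a₆ ≤ 1) {x y : K} (h : W.toAffine.Equation x y)
    (hx : 1 < v x) : v y ^ 2 = v x ^ 3 := by
  have hy : y ^ 2 = x ^ 3 + (W.a₄ * x + W.a₆) := by
    rw [equation_iff] at h
    simp only [a₁_of_isShortNF, a₂_of_isShortNF, a₃_of_isShortNF] at h
    linear_combination h
  have hlow : v (W.a₄ * x + W.a₆) < v (x ^ 3) :=
    calc v (W.a₄ * x + W.a₆) ≤ max (v W.a₄ * v x) (v W.a₆) := by
          simpa only [map_mul] using hv (W.a₄ * x) W.a₆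
      _ ≤ v x := max_le (mul_le_of_le_one_left (v.nonneg x) ha₄) (ha₆.trans hx.le)
      _ < v (x ^ 3) := by
          rw [map_pow]; exact lt_self_pow₀ hx (by norm_num)
  rw [← map_pow, hy, hv.add_eq_left_of_lt hlow, map_pow]

namespace WeierstrassCurve.Affine.Point

variable [DecidableEq K]

variable (v) in
-- Junk value `0` at the point at infinity, where `x` has a pole.
def absX : W.toAffine.Point → ℝ
  | .zero => 0
  | .some x _ _ => v x

lemma absX_two_nsmul (hv : IsNonarchimedean v) (h₂ : v 2 < 1) [NeZero (2 : K)]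
    (ha₄ : v W.a₄ ≤ 1) (ha₆ : v W.a₆ ≤ 1) {P : W.toAffine.Point} (hP : 1 < absX v P) :
    absX v (2 • P) = absX v P / v 2 ^ 2 := by
  rcases P with _ | ⟨x, y, h⟩
  · exact absurd hP (by simp [absX])
  simp only [absX] at hP ⊢
  have hx₀ : 0 < v x := one_pos.trans hP
  have hy := h.left.abv_sq_eq hv ha₄ ha₆ hP
  have hy₀ : y ≠ 0 := by
    rintro rfl
    rw [v.map_zero, zero_pow two_ne_zero] at hy
    exact (pow_pos hx₀ 3).ne' hy.symm
  have h2 : (2 : K) ≠ 0 := two_ne_zero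
  have hv2 : 0 < v 2 := v.pos h2
  have hneg : W.toAffine.negY x y = -y := by simp [negY]
  have hyne : y ≠ W.toAffine.negY x y := by
    rw [hneg]; intro h'
    have : 2 * y = 0 := by linear_combination h'
    exact hy₀ ((mul_eq_zero.mp this).resolve_left h2)
  have hslope : W.toAffine.slope x x y y = (3 * x ^ 2 + W.a₄) / (2 * y) := by
    rw [slope_of_Y_ne rfl hyne, hneg]
    simp only [a₁_of_isShortNF, a₂_of_isShortNF]
    ring_nf
  have hnum : v (3 * x ^ 2 + W.a₄) = v x ^ 2 := by
    have : v W.a₄ < v (3 * x ^ 2) := by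
      rw [map_mul, v.apply_three_eq_one hv h₂, one_mul, map_pow]
      exact ha₄.trans_lt (one_lt_pow₀ hP two_ne_zero)
    rw [hv.add_eq_left_of_lt this, map_mul, v.apply_three_eq_one hv h₂, one_mul, map_pow]
  have hℓ : v (W.toAffine.slope x x y y) ^ 2 = v x / v 2 ^ 2 := by
    rw [hslope, map_div₀, hnum, map_mul, div_pow, mul_pow, hy]
    field_simp
  rw [two_nsmul, add_self_of_Y_ne hyne]
  simp only [addX, a₁_of_isShortNF, a₂_of_isShortNF]
  have hlt : v (x + x) < v (W.toAffine.slope x x y y ^ 2) := by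
    rw [map_pow, hℓ, ← two_mul, map_mul, lt_div_iff₀ (by positivity)]
    calc v 2 * v x * v 2 ^ 2 = v 2 ^ 3 * v x := by ring
      _ < 1 * v x := by gcongr; exact pow_lt_one₀ hv2.le h₂ (by norm_num)
      _ = v x := one_mul _
  rw [show ∀ ℓ : K, ℓ ^ 2 + 0 * ℓ - 0 - x - x = ℓ ^ 2 + -(x + x) by intro; ring,
    hv.add_eq_left_of_lt (by rwa [map_neg_eq_map]), map_pow, hℓ]
lemma absX_two_pow_nsmul (hv : IsNonarchimedean v) (h₂ : v 2 < 1) [NeZero (2 : K)]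
    (ha₄ : v W.a₄ ≤ 1) (ha₆ : v W.a₆ ≤ 1) {P : W.toAffine.Point} (hP : 1 < absX v P) (m : ℕ) :
    absX v (2 ^ m • P) = absX v P / (v 2 ^ 2) ^ m := by
  have hv2 : 0 < v 2 := v.pos two_ne_zero
  induction m with
  | zero => simp
  | succ m ih =>
    have hm : 1 < absX v (2 ^ m • P) := by
      rw [ih]
      exact hP.trans_le (le_div_self (by linarith) (by positivity)
        (pow_le_one₀ (by positivity) (pow_le_one₀ hv2.le h₂.le)))
    rw [pow_succ 2 m, mul_nsmul, absX_two_nsmul hv h₂ ha₄ ha₆ hm, ih, pow_succ _ m, div_div]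

lemma not_isOfFinAddOrder_of_one_lt_absX (hv : IsNonarchimedean v) (h₂ : v 2 < 1)
    [NeZero (2 : K)] (ha₄ : v W.a₄ ≤ 1) (ha₆ : v W.a₆ ≤ 1) {P : W.toAffine.Point}
    (hP : 1 < absX v P) : ¬IsOfFinAddOrder P := by
  have hv2 : 0 < v 2 := v.pos two_ne_zero
  have hinj : Function.Injective fun m : ℕ => 2 ^ m • P := by
    intro a b hab
    have habs := congrArg (absX v) hab
    simp only [absX_two_pow_nsmul hv h₂ ha₄ ha₆ hP, div_eq_mul_inv] at habs
    exact (pow_right_strictAnti₀ (by positivity) (pow_lt_one₀ hv2.le h₂ two_ne_zero)).injective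
      (inv_injective (mul_left_cancel₀ (by positivity) habs))
  exact fun hfin => Set.infinite_of_injective_forall_mem hinj
    (fun m => nsmul_mem (AddSubmonoid.mem_multiples P) (2 ^ m)) hfin.finite_multiples

end WeierstrassCurve.Affine.Point

end Doubling

namespace Rat.AbsoluteValue

lemma isNonarchimedean_padic (p : ℕ) [Fact p.Prime] : IsNonarchimedean (padic p) :=
  fun a b => by
    simp only [padic_eq_padicNorm]
    exact_mod_cast padicNorm.nonarchimedean

lemma padic_self (p : ℕ) [Fact p.Prime] : padic p p = (p : ℝ)⁻¹ := by
  rw [padic_eq_padicNorm, padicNorm.padicNorm_p_of_prime]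
  push_cast
  rfl

lemma padic_intCast_eq_one {p : ℕ} [Fact p.Prime] {n : ℤ} (h : ¬(p : ℤ) ∣ n) :
    padic p n = 1 := by
  rw [padic_eq_padicNorm, padicNorm.int_eq_one_iff _ |>.mpr h, Rat.cast_one]

end Rat.AbsoluteValue

open Rat.AbsoluteValue Point

instance : congruentCurveFive.IsShortNF := ⟨rfl, rfl, rfl⟩

lemma congruentCurveFive_nonsingular : congruentCurveFive.toAffine.Nonsingular (-4) 6 := by
  rw [nonsingular_iff, equation_iff]
  norm_num [congruentCurveFive]

lemma absX_two_nsmul_congruentCurveFive :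
    absX (padic 2) (2 • some _ _ congruentCurveFive_nonsingular) = 16 := by
  have h6 : (6 : ℚ) ≠ congruentCurveFive.toAffine.negY (-4) 6 := by
    norm_num [negY, congruentCurveFive]
  have hx : congruentCurveFive.toAffine.addX (-4) (-4)
      (congruentCurveFive.toAffine.slope (-4) (-4) 6 6) = 1681 / (9 * 2 ^ 4) := by
    rw [slope_of_Y_ne rfl h6]
    norm_num [addX, negY, congruentCurveFive]
  have h1681 : padic 2 1681 = 1 := by exact_mod_cast padic_intCast_eq_one (n := 1681) (by decide)
  have h9 : padic 2 9 = 1 := by exact_mod_cast padic_intCast_eq_one (n := 9) (by decide)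
  have h2 : padic 2 2 = 2⁻¹ := by exact_mod_cast padic_self 2
  rw [two_nsmul, add_self_of_Y_ne h6]
  simp only [absX, hx, map_div₀, map_mul, map_pow, h1681, h9, h2]
  norm_num

lemma not_isOfFinAddOrder_congruentCurveFive :
    ¬IsOfFinAddOrder (some _ _ congruentCurveFive_nonsingular) := by
  have h₂ : padic 2 2 < 1 := by
    rw [show (2 : ℚ) = (2 : ℕ) by norm_num, padic_self]
    norm_num
  have ha₄ : padic 2 congruentCurveFive.a₄ ≤ 1 := by
    exact_mod_cast padic_le_one 2 (-25)
  have ha₆ : padic 2 congruentCurveFive.a₆ ≤ 1 := by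
    simp [congruentCurveFive]
  have h2P := not_isOfFinAddOrder_of_one_lt_absX (isNonarchimedean_padic 2) h₂ ha₄ ha₆
    (by rw [absX_two_nsmul_congruentCurveFive]; norm_num)
  exact fun hP => h2P hP.nsmul

/-- The group of rational points of `y ^ 2 = x ^ 3 - 25 * x` is infinite; in particular
`(-4, 6)` lies on the curve and is a point of infinite order. -/
theorem congruent_curve_five_infinite_rank :
    Infinite congruentCurveFive.toAffine.Point ∧
      ∃ h : congruentCurveFive.toAffine.Nonsingular (-4) 6,
        ∀ n : ℕ, 0 < n → n • (WeierstrassCurve.Affine.Point.some _ _ h) ≠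
          (0 : congruentCurveFive.toAffine.Point) := by
  have hP := not_isOfFinAddOrder_congruentCurveFive
  refine ⟨not_finite_iff_infinite.mp fun _ => hP (isOfFinAddOrder_of_finite _),
    congruentCurveFive_nonsingular, fun n hn hnP => ?_⟩
  exact hP (isOfFinAddOrder_iff_nsmul_eq_zero.mpr ⟨n, hn, hnP⟩)
end
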